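/- arXiv:1812.02690 — 3 statements merged into one kernel-verified Lean document; each statement's English description precedes it below -/
import Mathlib

section
/- Let R : ℝ^d → ℝ be concave, differentiable, β-smooth in the sense that R(y) ≥ R(x) + ⟨∇R(x), y-x⟩ - β‖y-x‖² for all x,y, and let K ⊆ ℝ^d be convex with diameter at most 1 in the Euclidean norm. Suppose x₀ ∈ K with R(x*) - R(x₀) ≤ B where x* ∈ argmax_{K} R, and the iterates satisfy x_{t+1} = (1-η)x_t + η v_t where v_t ∈ K satisfies ⟨v_t, ∇R(x_t)⟩ ≥ max_{v∈K} ⟨v, ∇R(x_t)⟩ - ε₁. Then R(x*) - R(x_T) ≤ B e^{-Tη} + ε₁ + ηβ. -/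
open Real RealInnerProductSpace

/-!
Concavity bounds the gap `R x* - R x_t` by the linear gain `⟪∇R x_t, x* - x_t⟫`, which the oracle
realizes up to `ε₁` along `v_t - x_t`; smoothness costs at most `β η²` for a step of length at most
`η`. Hence the gap contracts as `e_{t+1} ≤ (1 - η) e_t + η (ε₁ + η β)`, and unrolling with
`(1 - η)^T ≤ e^{-T η}` gives the bound.
-/

theorem ConcaveOn.le_add_fderiv {E : Type*} [NormedAddCommGroup E] [NormedSpace ℝ E] {f : E → ℝ}
    (hf : ConcaveOn ℝ Set.univ f) {x : E} (hfx : DifferentiableAt ℝ f x) (y : E) :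
    f y ≤ f x + fderiv ℝ f x (y - x) := by
  have hline : ConcaveOn ℝ Set.univ (f ∘ AffineMap.lineMap x y) :=
    hf.comp_affineMap (AffineMap.lineMap x y)
  have hderiv : HasDerivAt (f ∘ AffineMap.lineMap (k := ℝ) x y) (fderiv ℝ f x (y - x)) 0 := by
    refine HasFDerivAt.comp_hasDerivAt (0 : ℝ) ?_ AffineMap.hasDerivAt_lineMap
    simpa using hfx.hasFDerivAt
  have hslope := hline.slope_le_of_hasDerivAt (Set.mem_univ _) (Set.mem_univ _) one_pos hderiv
  simp only [slope_def_field, Function.comp_apply, AffineMap.lineMap_apply_zero,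
    AffineMap.lineMap_apply_one, sub_zero, div_one] at hslope
  linarith

theorem ConcaveOn.le_add_inner_gradient {E : Type*} [NormedAddCommGroup E] [InnerProductSpace ℝ E]
    [CompleteSpace E] {f : E → ℝ} (hf : ConcaveOn ℝ Set.univ f) {x : E}
    (hfx : DifferentiableAt ℝ f x) (y : E) :
    f y ≤ f x + ⟪gradient f x, y - x⟫ := by
  simpa [gradient, InnerProductSpace.toDual_symm_apply] using hf.le_add_fderiv hfx y

theorem frankWolfe_iterate_mem {E : Type*} [AddCommGroup E] [Module ℝ E] {K : Set E}
    (hK : Convex ℝ K) {η : ℝ} (hη0 : 0 ≤ η) (hη1 : η ≤ 1) {x v : ℕ → E} (hx0 : x 0 ∈ K)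
    (hvK : ∀ t, v t ∈ K) (hstep : ∀ t, x (t + 1) = (1 - η) • x t + η • v t) (t : ℕ) : x t ∈ K := by
  induction t with
  | zero => exact hx0
  | succ t ih => exact hstep t ▸ hK ih (hvK t) (by linarith) hη0 (by ring)

theorem frankWolfe_gap_step_le {E : Type*} [NormedAddCommGroup E] [InnerProductSpace ℝ E]
    [CompleteSpace E] {R : E → ℝ} (hconc : ConcaveOn ℝ Set.univ R) {x v xstar : E}
    (hdiff : DifferentiableAt ℝ R x) {β ε₁ η : ℝ} (hβ : 0 ≤ β) (hη : 0 ≤ η)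
    (hsmooth : ∀ y, R x + ⟪gradient R x, y - x⟫ - β * ‖y - x‖ ^ 2 ≤ R y)
    (hvx : ‖v - x‖ ≤ 1) (horacle : ⟪xstar, gradient R x⟫ - ε₁ ≤ ⟪v, gradient R x⟫) :
    R xstar - R ((1 - η) • x + η • v) ≤ (1 - η) * (R xstar - R x) + η * (ε₁ + η * β) := by
  set g := gradient R x
  have hdisp : (1 - η) • x + η • v - x = η • (v - x) := by module
  have hascent := hsmooth ((1 - η) • x + η • v)
  rw [hdisp, real_inner_smul_right, norm_smul, norm_of_nonneg hη] at hascent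
  have hcost : β * (η * ‖v - x‖) ^ 2 ≤ η * (η * β) :=
    calc β * (η * ‖v - x‖) ^ 2 ≤ β * η ^ 2 := by gcongr; exact mul_le_of_le_one_right hη hvx
      _ = η * (η * β) := by ring
  have hgap : R xstar - R x ≤ ⟪g, xstar - x⟫ := by
    linarith [hconc.le_add_inner_gradient hdiff xstar]
  have hgain : ⟪g, xstar - x⟫ - ε₁ ≤ ⟪g, v - x⟫ := by
    rw [real_inner_comm g xstar, real_inner_comm g v] at horacle
    simp only [inner_sub_right]; linarith
  linarith [mul_le_mul_of_nonneg_left hgap hη, mul_le_mul_of_nonneg_left hgain hη]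

theorem le_one_sub_pow_mul_add_of_le_one_sub_mul_add {e : ℕ → ℝ} {η c B : ℝ}
    (hη1 : η ≤ 1) (hc : 0 ≤ c) (he0 : e 0 ≤ B)
    (hrec : ∀ t, e (t + 1) ≤ (1 - η) * e t + η * c) (T : ℕ) :
    e T ≤ (1 - η) ^ T * B + c := by
  induction T with
  | zero => rw [pow_zero, one_mul]; linarith
  | succ T ih =>
    calc e (T + 1) ≤ (1 - η) * e T + η * c := hrec T
      _ ≤ (1 - η) * ((1 - η) ^ T * B + c) + η * c := by gcongr
      _ = (1 - η) ^ (T + 1) * B + c := by ring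

theorem one_sub_pow_le_exp_neg_mul {η : ℝ} (hη1 : η ≤ 1) (T : ℕ) :
    (1 - η) ^ T ≤ exp (-(T * η)) := by
  calc (1 - η) ^ T ≤ exp (-η) ^ T := pow_le_pow_left₀ (by linarith) (one_sub_le_exp_neg η) T
    _ = exp (-(T * η)) := by rw [← exp_nat_mul]; ring_nf

theorem frank_wolfe_convergence_general (d : ℕ)
    (R : EuclideanSpace ℝ (Fin d) → ℝ)
    (K : Set (EuclideanSpace ℝ (Fin d)))
    (hK : Convex ℝ K)
    (hdiam : ∀ x ∈ K, ∀ y ∈ K, ‖x - y‖ ≤ 1)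
    (hconc : ConcaveOn ℝ Set.univ R) (hdiff : Differentiable ℝ R)
    (β B ε₁ η : ℝ) (hβ : 0 < β) (hB : 0 < B) (hε₁ : 0 ≤ ε₁)
    (hη0 : 0 < η) (hη1 : η ≤ 1)
    (hsmooth : ∀ x y : EuclideanSpace ℝ (Fin d),
      R y ≥ R x + ⟪gradient R x, y - x⟫ - β * ‖y - x‖ ^ 2)
    (x v : ℕ → EuclideanSpace ℝ (Fin d))
    (xstar : EuclideanSpace ℝ (Fin d)) (hxstarK : xstar ∈ K)
    (hx0 : x 0 ∈ K) (hB0 : R xstar - R (x 0) ≤ B)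
    (hvK : ∀ t, v t ∈ K)
    (hvopt : ∀ t, ∀ w ∈ K,
      ⟪v t, gradient R (x t)⟫ ≥ ⟪w, gradient R (x t)⟫ - ε₁)
    (hstep : ∀ t, x (t + 1) = (1 - η) • x t + η • v t) :
    ∀ T : ℕ, R xstar - R (x T) ≤ B * Real.exp (-(T * η)) + ε₁ + η * β := by
  intro T
  have hxK := frankWolfe_iterate_mem hK hη0.le hη1 hx0 hvK hstep
  have hrec : ∀ t, R xstar - R (x (t + 1)) ≤ (1 - η) * (R xstar - R (x t)) + η * (ε₁ + η * β) :=
    fun t => hstep t ▸ frankWolfe_gap_step_le hconc (hdiff (x t)) hβ.le hη0.le (hsmooth (x t))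
      (hdiam _ (hvK t) _ (hxK t)) (hvopt t xstar hxstarK)
  have hunrolled := le_one_sub_pow_mul_add_of_le_one_sub_mul_add (e := fun t => R xstar - R (x t))
    hη1 (by positivity) hB0 hrec T
  have hexp := mul_le_mul_of_nonneg_right (one_sub_pow_le_exp_neg_mul hη1 T) hB.le
  linarith

/-- Frank–Wolfe with an `ε₁`-approximate linear maximization oracle over a
convex set of diameter at most `1`, for a `β`-smooth concave objective:
`R(x*) - R(x_T) ≤ B e^{-Tη} + ε₁ + ηβ`. -/
theorem frank_wolfe_convergence (d : ℕ)
    (R : EuclideanSpace ℝ (Fin d) → ℝ)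
    (K : Set (EuclideanSpace ℝ (Fin d)))
    (hK : Convex ℝ K)
    (hdiam : ∀ x ∈ K, ∀ y ∈ K, ‖x - y‖ ≤ 1)
    (hconc : ConcaveOn ℝ Set.univ R) (hdiff : Differentiable ℝ R)
    (β B ε₁ η : ℝ) (hβ : 0 < β) (hB : 0 < B) (hε₁ : 0 ≤ ε₁)
    (hη0 : 0 < η) (hη1 : η ≤ 1)
    (hsmooth : ∀ x y : EuclideanSpace ℝ (Fin d),
      R y ≥ R x + ⟪gradient R x, y - x⟫ - β * ‖y - x‖ ^ 2)
    (x v : ℕ → EuclideanSpace ℝ (Fin d))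
    (xstar : EuclideanSpace ℝ (Fin d)) (hxstarK : xstar ∈ K)
    (hxstar : ∀ y ∈ K, R y ≤ R xstar)
    (hx0 : x 0 ∈ K) (hB0 : R xstar - R (x 0) ≤ B)
    (hvK : ∀ t, v t ∈ K)
    (hvopt : ∀ t, ∀ w ∈ K,
      ⟪v t, gradient R (x t)⟫ ≥ ⟪w, gradient R (x t)⟫ - ε₁)
    (hstep : ∀ t, x (t + 1) = (1 - η) • x t + η • v t) :
    ∀ T : ℕ, R xstar - R (x T) ≤ B * Real.exp (-(T * η)) + ε₁ + η * β :=
  frank_wolfe_convergence_general d R K hK hdiam hconc hdiff β B ε₁ η hβ hB hε₁ hη0 hη1 hsmooth x v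
    xstar hxstarK hx0 hB0 hvK hvopt hstep
end

section
/- The entropy of the induced state distribution is not a concave function of the policy: there exists a finite MDP and stationary policies π₁, π₂ with π₀ = (π₁+π₂)/2 such that H(d_{2,π₀}) < (H(d_{2,π₁}) + H(d_{2,π₂}))/2, where d_{2,π} is the state distribution at timestep 2. -/
open Real

/-- The two-step state distribution of a policy `pol` in a finite MDP with
transition kernel `P`, starting from state `0`. -/
def twoStepDist (P : Fin 6 → Fin 2 → Fin 6 → ℝ) (pol : Fin 6 → Fin 2 → ℝ) :
    Fin 6 → ℝ :=
  fun s2 => ∑ s1, (∑ a0, pol 0 a0 * P 0 a0 s1) * (∑ a1, pol s1 a1 * P s1 a1 s2)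

/-- Shannon entropy of a distribution on a finite state space. -/
noncomputable def shannonEntropy {S : Type*} [Fintype S] (v : S → ℝ) : ℝ :=
  -∑ s, v s * Real.log (v s)

/-- Deterministic transition targets for the counterexample MDP. -/
def cexTgt : Fin 6 → Fin 2 → Fin 6 := fun s a =>
  if s = 0 then (if a = 0 then 1 else 2)
  else if s = 1 then (if a = 0 then 3 else 4)
  else if s = 2 then (if a = 0 then 4 else 5)
  else if s = 3 then 3 else if s = 4 then 4 else 5

def cexP : Fin 6 → Fin 2 → Fin 6 → ℝ := fun s a s' => if s' = cexTgt s a then 1 else 0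

noncomputable def cexPol1 : Fin 6 → Fin 2 → ℝ := fun s a =>
  if s = 0 then (if a = 0 then 2/3 else 1/3)
  else if s = 2 then (if a = 0 then 0 else 1)
  else 1/2

noncomputable def cexPol2 : Fin 6 → Fin 2 → ℝ := fun s a =>
  if s = 0 then (if a = 0 then 1/3 else 2/3)
  else if s = 1 then (if a = 0 then 1 else 0)
  else 1/2

lemma cex_key : 11 * Real.log 2 < 7 * Real.log 3 := by
  have h := Real.log_lt_log (show (0:ℝ) < 2048 by norm_num)
    (show (2048:ℝ) < 2187 by norm_num)
  rw [show (2048:ℝ) = 2^11 by norm_num, show (2187:ℝ) = 3^7 by norm_num,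
    Real.log_pow, Real.log_pow] at h
  push_cast at h
  linarith

/-- The entropy of the induced state distribution is not concave in the
policy: there is a finite MDP and stationary policies `π₁, π₂` whose average
`π₀` satisfies `H(d_{2,π₀}) < (H(d_{2,π₁}) + H(d_{2,π₂}))/2`. -/
theorem entropy_not_concave_in_policy :
    ∃ (P : Fin 6 → Fin 2 → Fin 6 → ℝ) (pol₁ pol₂ : Fin 6 → Fin 2 → ℝ),
      (∀ s a s', 0 ≤ P s a s') ∧ (∀ s a, ∑ s', P s a s' = 1) ∧
      (∀ s a, 0 ≤ pol₁ s a) ∧ (∀ s, ∑ a, pol₁ s a = 1) ∧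
      (∀ s a, 0 ≤ pol₂ s a) ∧ (∀ s, ∑ a, pol₂ s a = 1) ∧
      shannonEntropy (twoStepDist P (fun s a => (pol₁ s a + pol₂ s a) / 2))
        < (shannonEntropy (twoStepDist P pol₁)
            + shannonEntropy (twoStepDist P pol₂)) / 2 := by
  refine ⟨cexP, cexPol1, cexPol2, ?_, ?_, ?_, ?_, ?_, ?_, ?_⟩
  · intro s a s'
    unfold cexP
    split <;> norm_num
  · intro s a
    fin_cases s <;> fin_cases a <;> simp [cexP, cexTgt, Fin.sum_univ_six]
  · intro s a
    unfold cexPol1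
    split_ifs <;> norm_num
  · intro s
    fin_cases s <;> simp [cexPol1, Fin.sum_univ_two] <;> norm_num
  · intro s a
    unfold cexPol2
    split_ifs <;> norm_num
  · intro s
    fin_cases s <;> simp [cexPol2, Fin.sum_univ_two] <;> norm_num
  · have e1 : shannonEntropy (twoStepDist cexP cexPol1) = Real.log 3 := by
      simp only [shannonEntropy, twoStepDist, Fin.sum_univ_six, Fin.sum_univ_two]
      simp [cexP, cexTgt, cexPol1]
      rw [show (2/3*2⁻¹ : ℝ) = 3⁻¹ by norm_num, Real.log_inv]
      ring
    have e2 : shannonEntropy (twoStepDist cexP cexPol2) = Real.log 3 := by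
      simp only [shannonEntropy, twoStepDist, Fin.sum_univ_six, Fin.sum_univ_two]
      simp [cexP, cexTgt, cexPol2]
      rw [show (2/3*2⁻¹ : ℝ) = 3⁻¹ by norm_num, Real.log_inv]
      ring
    rw [e1, e2]
    have e0 : shannonEntropy (twoStepDist cexP
        (fun s a => (cexPol1 s a + cexPol2 s a) / 2))
        = -(3/4 * Real.log (3/8)) + 1/4 * Real.log 4 := by
      simp only [shannonEntropy, twoStepDist, Fin.sum_univ_six, Fin.sum_univ_two]
      simp [cexP, cexTgt, cexPol1, cexPol2]
      rw [show ((3⁻¹+2/3)/2 * ((1+2⁻¹)/2) : ℝ) = 3/8 by norm_num,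
        show ((2/3+3⁻¹)/2 * (2⁻¹/2) + (3⁻¹+2/3)/2 * (2⁻¹/2) : ℝ) = 1/4 by norm_num,
        show ((2/3+3⁻¹)/2 * ((2⁻¹+1)/2) : ℝ) = 3/8 by norm_num,
        show ((1:ℝ)/4) = 4⁻¹ by norm_num, Real.log_inv]
      ring
    rw [e0]
    have l38 : Real.log (3/8 : ℝ) = Real.log 3 - 3 * Real.log 2 := by
      rw [Real.log_div (by norm_num) (by norm_num), show (8:ℝ) = 2^3 by norm_num,
        Real.log_pow]
      push_cast; ring
    have l14 : Real.log (4 : ℝ) = 2 * Real.log 2 := by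
      rw [show (4:ℝ) = 2^2 by norm_num, Real.log_pow]
      push_cast; ring
    rw [l38, l14]
    have := cex_key
    linarith
end

section
/- (Simulation lemma) If two MDPs share state space, action space, reward r with ‖r‖_∞ ≤ 1, and discount γ ∈ [0,1), and their transition kernels satisfy ‖P̂(·|s,a) - P(·|s,a)‖₁ ≤ ε for all (s,a), then for any stationary policy π, the values satisfy |⟨d_{P,π}, r⟩ - ⟨d_{P̂,π}, r⟩| ≤ ε/(1-γ), where d_{P,π} denotes the discounted state-action distribution of π under transition kernel P. -/
open Matrix Finset

/-!
Write `M` and `M̂` for the state-transition matrices of the policy under `P` and `P̂`. Both are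
column-stochastic, so they do not increase the `ℓ¹` norm, while every column of `M̂ - M` is an
average of the columns of `P̂ - P` and thus has `ℓ¹` norm at most `ε`. From
`M̂ᵗ⁺¹ d₀ - Mᵗ⁺¹ d₀ = M (M̂ᵗ d₀ - Mᵗ d₀) + (M̂ - M) M̂ᵗ d₀`, the time-`t` distributions are
`tε`-apart in `ℓ¹`, so the expected rewards at time `t` differ by at most `tε`. Summing,
`(1 - γ) ∑ₜ γᵗ t ε = εγ / (1 - γ) ≤ ε / (1 - γ)`.
-/

section Averages

variable {ι κ : Type*} [Fintype ι] {w : ι → ℝ} {c : ℝ}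

theorem abs_sum_mul_le_of_abs_le (hw0 : ∀ i, 0 ≤ w i) (hw1 : ∑ i, w i = 1) {f : ι → ℝ}
    (hf : ∀ i, |f i| ≤ c) : |∑ i, w i * f i| ≤ c :=
  calc |∑ i, w i * f i| ≤ ∑ i, w i * |f i| := by
        refine (abs_sum_le_sum_abs _ _).trans_eq ?_
        simp_rw [abs_mul, abs_of_nonneg (hw0 _)]
    _ ≤ ∑ i, w i * c := by gcongr with i; exact hw0 i; exact hf i
    _ = c := by rw [← sum_mul, hw1, one_mul]

theorem sum_abs_sum_mul_le_of_sum_abs_le [Fintype κ] (hw0 : ∀ i, 0 ≤ w i) (hw1 : ∑ i, w i = 1)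
    {f : ι → κ → ℝ} (hf : ∀ i, ∑ k, |f i k| ≤ c) : ∑ k, |∑ i, w i * f i k| ≤ c :=
  calc ∑ k, |∑ i, w i * f i k| ≤ ∑ k, ∑ i, w i * |f i k| := by
        gcongr with k
        refine (abs_sum_le_sum_abs _ _).trans_eq ?_
        simp_rw [abs_mul, abs_of_nonneg (hw0 _)]
    _ = ∑ i, w i * ∑ k, |f i k| := by rw [sum_comm]; simp_rw [mul_sum]
    _ ≤ c := (le_abs_self _).trans <| abs_sum_mul_le_of_abs_le hw0 hw1 fun i => by
        rw [abs_of_nonneg (sum_nonneg fun k _ => abs_nonneg _)]; exact hf i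

end Averages

namespace Matrix

variable {n : Type*} [Fintype n]

theorem abs_dotProduct_le {v : n → ℝ} {c : ℝ} (hv : ∀ i, |v i| ≤ c) (x : n → ℝ) :
    |x ⬝ᵥ v| ≤ c * ∑ i, |x i| :=
  calc |x ⬝ᵥ v| ≤ ∑ i, |x i| * c := by
        refine (abs_sum_le_sum_abs _ _).trans (sum_le_sum fun i _ => ?_)
        rw [abs_mul]
        exact mul_le_mul_of_nonneg_left (hv i) (abs_nonneg _)
    _ = c * ∑ i, |x i| := by rw [← sum_mul, mul_comm]

theorem sum_abs_mulVec_le {M : Matrix n n ℝ} {c : ℝ} (hM : ∀ j, ∑ i, |M i j| ≤ c)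
    (x : n → ℝ) : ∑ i, |(M *ᵥ x) i| ≤ c * ∑ j, |x j| :=
  calc ∑ i, |(M *ᵥ x) i| ≤ ∑ i, ∑ j, |M i j| * |x j| := by
        gcongr with i
        refine (abs_sum_le_sum_abs _ _).trans_eq ?_
        simp_rw [abs_mul]
    _ = ∑ j, (∑ i, |M i j|) * |x j| := by rw [sum_comm]; simp_rw [sum_mul]
    _ ≤ ∑ j, c * |x j| := by gcongr with j; exact hM j
    _ = c * ∑ j, |x j| := by rw [mul_sum]

variable [DecidableEq n]

theorem sum_abs_pow_mulVec_le {M : Matrix n n ℝ} (hM : ∀ j, ∑ i, |M i j| ≤ 1)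
    (x : n → ℝ) (t : ℕ) : ∑ i, |(M ^ t *ᵥ x) i| ≤ ∑ i, |x i| := by
  induction t with
  | zero => simp
  | succ t ih =>
    rw [pow_succ', ← mulVec_mulVec]
    exact (sum_abs_mulVec_le hM _).trans (by linarith)

theorem sum_abs_pow_mulVec_sub_pow_mulVec_le {M N : Matrix n n ℝ} {ε : ℝ} (hε : 0 ≤ ε)
    (hM : ∀ j, ∑ i, |M i j| ≤ 1) (hN : ∀ j, ∑ i, |N i j| ≤ 1)
    (hNM : ∀ j, ∑ i, |(N - M) i j| ≤ ε) (x : n → ℝ) (t : ℕ) :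
    ∑ i, |(N ^ t *ᵥ x - M ^ t *ᵥ x) i| ≤ t * ε * ∑ i, |x i| := by
  induction t with
  | zero => simp
  | succ t ih =>
    have hsplit : N ^ (t + 1) *ᵥ x - M ^ (t + 1) *ᵥ x
        = M *ᵥ (N ^ t *ᵥ x - M ^ t *ᵥ x) + (N - M) *ᵥ (N ^ t *ᵥ x) := by
      rw [pow_succ', pow_succ', ← mulVec_mulVec, ← mulVec_mulVec, mulVec_sub, sub_mulVec]
      abel
    calc ∑ i, |(N ^ (t + 1) *ᵥ x - M ^ (t + 1) *ᵥ x) i|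
        ≤ ∑ i, |(M *ᵥ (N ^ t *ᵥ x - M ^ t *ᵥ x)) i| + ∑ i, |((N - M) *ᵥ (N ^ t *ᵥ x)) i| := by
          rw [hsplit, ← sum_add_distrib]
          exact sum_le_sum fun i _ => abs_add_le _ _
      _ ≤ 1 * (t * ε * ∑ i, |x i|) + ε * ∑ i, |x i| := by
          gcongr
          · exact (sum_abs_mulVec_le hM _).trans (by gcongr)
          · exact (sum_abs_mulVec_le hNM _).trans
              (mul_le_mul_of_nonneg_left (sum_abs_pow_mulVec_le hN x t) hε)
      _ = (t + 1 : ℕ) * ε * ∑ i, |x i| := by push_cast; ring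

end Matrix

theorem summable_pow_mul_of_abs_le {γ B : ℝ} (hγ0 : 0 ≤ γ) (hγ1 : γ < 1) {a : ℕ → ℝ}
    (ha : ∀ t, |a t| ≤ B) : Summable fun t => γ ^ t * a t :=
  ((summable_geometric_of_lt_one hγ0 hγ1).mul_right B).of_norm_bounded fun t => by
    rw [Real.norm_eq_abs, abs_mul, abs_of_nonneg (pow_nonneg hγ0 t)]
    exact mul_le_mul_of_nonneg_left (ha t) (pow_nonneg hγ0 t)

theorem abs_tsum_pow_mul_sub_le {γ B C : ℝ} (hγ0 : 0 ≤ γ) (hγ1 : γ < 1) {a b : ℕ → ℝ}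
    (ha : ∀ t, |a t| ≤ B) (hb : ∀ t, |b t| ≤ B) (hab : ∀ t, |a t - b t| ≤ t * C) :
    |∑' t, γ ^ t * a t - ∑' t, γ ^ t * b t| ≤ C * (γ / (1 - γ) ^ 2) := by
  have hγ : ‖γ‖ < 1 := by rwa [Real.norm_eq_abs, abs_of_nonneg hγ0]
  rw [← (summable_pow_mul_of_abs_le hγ0 hγ1 ha).tsum_sub (summable_pow_mul_of_abs_le hγ0 hγ1 hb),
    ← Real.norm_eq_abs]
  refine tsum_of_norm_bounded ((hasSum_coe_mul_geometric_of_norm_lt_one hγ).mul_left C)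
    fun t => ?_
  rw [Real.norm_eq_abs, ← mul_sub, abs_mul, abs_of_nonneg (pow_nonneg hγ0 t)]
  calc γ ^ t * |a t - b t| ≤ γ ^ t * (t * C) := mul_le_mul_of_nonneg_left (hab t) (pow_nonneg hγ0 t)
    _ = C * (t * γ ^ t) := by ring

/-- The simulation lemma (Lemma 8.5.4 of Kakade 2003): if two MDPs share
states, actions, a reward bounded by `1` and discount `γ`, and their kernels
are `ε`-close in `L¹` at every state-action pair, then the discounted values
of any stationary policy differ by at most `ε/(1-γ)`. -/
theorem simulation_lemma (S A : Type*) [Fintype S] [DecidableEq S] [Fintype A]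
    (γ ε : ℝ) (hγ0 : 0 ≤ γ) (hγ1 : γ < 1) (hε : 0 ≤ ε)
    (P Phat : S → A → S → ℝ)
    (hP0 : ∀ s a s', 0 ≤ P s a s') (hP1 : ∀ s a, ∑ s', P s a s' = 1)
    (hPhat0 : ∀ s a s', 0 ≤ Phat s a s') (hPhat1 : ∀ s a, ∑ s', Phat s a s' = 1)
    (pol : S → A → ℝ) (hpol0 : ∀ s a, 0 ≤ pol s a) (hpol1 : ∀ s, ∑ a, pol s a = 1)
    (r : S → A → ℝ) (hr : ∀ s a, |r s a| ≤ 1)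
    (d0 : S → ℝ) (hd00 : ∀ s, 0 ≤ d0 s) (hd01 : ∑ s, d0 s = 1)
    (hclose : ∀ s a, ∑ s', |Phat s a s' - P s a s'| ≤ ε) :
    ∀ M Mhat : Matrix S S ℝ,
      (∀ s' s, M s' s = ∑ a, pol s a * P s a s') →
      (∀ s' s, Mhat s' s = ∑ a, pol s a * Phat s a s') →
      |((1 - γ) * ∑' t : ℕ, γ ^ t *
            ∑ s, ((M ^ t) *ᵥ d0) s * (∑ a, pol s a * r s a))
        - ((1 - γ) * ∑' t : ℕ, γ ^ t *
            ∑ s, ((Mhat ^ t) *ᵥ d0) s * (∑ a, pol s a * r s a))|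
        ≤ ε / (1 - γ) := by
  intro M Mhat hM hMhat
  set v : S → ℝ := fun s => ∑ a, pol s a * r s a
  have hv : ∀ s, |v s| ≤ 1 := fun s => abs_sum_mul_le_of_abs_le (hpol0 s) (hpol1 s) (hr s)
  have hM1 : ∀ s, ∑ s', |M s' s| ≤ 1 := fun s => by
    simp_rw [hM]
    exact sum_abs_sum_mul_le_of_sum_abs_le (hpol0 s) (hpol1 s) fun a => by
      simp_rw [abs_of_nonneg (hP0 s a _), hP1, le_refl]
  have hMhat1 : ∀ s, ∑ s', |Mhat s' s| ≤ 1 := fun s => by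
    simp_rw [hMhat]
    exact sum_abs_sum_mul_le_of_sum_abs_le (hpol0 s) (hpol1 s) fun a => by
      simp_rw [abs_of_nonneg (hPhat0 s a _), hPhat1, le_refl]
  have hMhat_sub_M : ∀ s, ∑ s', |(Mhat - M) s' s| ≤ ε := fun s => by
    simp_rw [Matrix.sub_apply, hM, hMhat, ← sum_sub_distrib, ← mul_sub]
    exact sum_abs_sum_mul_le_of_sum_abs_le (hpol0 s) (hpol1 s) (hclose s)
  have hd0 : ∑ s, |d0 s| = 1 := by simp_rw [abs_of_nonneg (hd00 _)]; exact hd01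
  have hvalue : ∀ N : Matrix S S ℝ, (∀ s, ∑ s', |N s' s| ≤ 1) → ∀ t, |(N ^ t *ᵥ d0) ⬝ᵥ v| ≤ 1 :=
    fun N hN t => (abs_dotProduct_le hv _).trans
      (by rw [one_mul, ← hd0]; exact sum_abs_pow_mulVec_le hN d0 t)
  have hgap : ∀ t : ℕ, |(M ^ t *ᵥ d0) ⬝ᵥ v - (Mhat ^ t *ᵥ d0) ⬝ᵥ v| ≤ t * ε := fun t => by
    rw [abs_sub_comm, ← sub_dotProduct]
    refine (abs_dotProduct_le hv _).trans ?_
    simpa [hd0] using sum_abs_pow_mulVec_sub_pow_mulVec_le hε hM1 hMhat1 hMhat_sub_M d0 t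
  have h1γ : 0 < 1 - γ := by linarith
  calc _ = (1 - γ) * |∑' t, γ ^ t * (M ^ t *ᵥ d0) ⬝ᵥ v - ∑' t, γ ^ t * (Mhat ^ t *ᵥ d0) ⬝ᵥ v| := by
        rw [← mul_sub, abs_mul, abs_of_pos h1γ]; rfl
    _ ≤ (1 - γ) * (ε * (γ / (1 - γ) ^ 2)) := by
        gcongr
        exact abs_tsum_pow_mul_sub_le hγ0 hγ1 (hvalue M hM1) (hvalue Mhat hMhat1) hgap
    _ = ε * γ / (1 - γ) := by field_simp
    _ ≤ ε / (1 - γ) := by gcongr; exact mul_le_of_le_one_right hε hγ1.le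
end
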